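/- For d ≥ 2, the largest Schmidt coefficient μ₁ of any unit vector in the antisymmetric subspace of ℂᵈ ⊗ ℂᵈ satisfies μ₁² ≤ 1/2. -/

import Mathlib

/-!
The top Schmidt coefficient is `μ₁ = ⟪u₁ ⊗ v₁, ξ⟫` for unit vectors `u₁, v₁`. Antisymmetry of `ξ`
gives `2 ⟪x ⊗ y, ξ⟫ = ⟪x ⊗ y - y ⊗ x, ξ⟫`, and `‖x ⊗ y - y ⊗ x‖² = 2 - 2 |⟪x, y⟫|² ≤ 2` for unit
`x, y`, so Cauchy–Schwarz gives `2 μ₁ ≤ √2`.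
-/

noncomputable section

/-- The simple tensor `x ⊗ y` of two vectors, realized in `EuclideanSpace ℂ (ι × κ)`. -/
def tens {ι κ : Type*} [Fintype ι] [Fintype κ] (x : EuclideanSpace ℂ ι) (y : EuclideanSpace ℂ κ) :
    EuclideanSpace ℂ (ι × κ) :=
  WithLp.toLp 2 (fun p : ι × κ => x p.1 * y p.2)

/-- `h = ∑ i, μ i • (u i ⊗ v i)` is a Schmidt decomposition of `h`. -/
def IsSchmidt {ι κ : Type*} [Fintype ι] [Fintype κ] (h : EuclideanSpace ℂ (ι × κ)) {r : ℕ}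
    (μ : Fin r → ℝ) (u : Fin r → EuclideanSpace ℂ ι) (v : Fin r → EuclideanSpace ℂ κ) : Prop :=
  (∀ i, 0 ≤ μ i) ∧ Orthonormal ℂ u ∧ Orthonormal ℂ v ∧
    h = ∑ i, (μ i : ℂ) • tens (u i) (v i)

/-- The antisymmetric subspace of `ℂᵈ ⊗ ℂᵈ`, spanned by `(eᵢ ⊗ eⱼ - eⱼ ⊗ eᵢ)/√2` for `i < j`. -/
def antisym (d : ℕ) : Submodule ℂ (EuclideanSpace ℂ (Fin d × Fin d)) :=
  Submodule.span ℂ {w | ∃ i j : Fin d, i < j ∧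
    w = ((Real.sqrt 2 : ℂ))⁻¹ •
      (tens (EuclideanSpace.single i 1) (EuclideanSpace.single j 1) -
       tens (EuclideanSpace.single j 1) (EuclideanSpace.single i 1))}

open scoped InnerProductSpace

section Tensor

variable {ι κ : Type*} [Fintype ι] [Fintype κ]

lemma inner_tens_tens (x a : EuclideanSpace ℂ ι) (y b : EuclideanSpace ℂ κ) :
    ⟪tens x y, tens a b⟫_ℂ = ⟪x, a⟫_ℂ * ⟪y, b⟫_ℂ := by
  simp only [PiLp.inner_apply, RCLike.inner_apply, tens, map_mul,
    Finset.sum_mul_sum, ← Finset.univ_product_univ, Finset.sum_product]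
  exact Finset.sum_congr rfl fun _ _ => Finset.sum_congr rfl fun _ _ => by ring

lemma norm_tens (x : EuclideanSpace ℂ ι) (y : EuclideanSpace ℂ κ) : ‖tens x y‖ = ‖x‖ * ‖y‖ := by
  refine (sq_eq_sq₀ (norm_nonneg _) (by positivity)).mp ?_
  rw [@norm_sq_eq_re_inner ℂ, inner_tens_tens, inner_self_eq_norm_sq_to_K,
    inner_self_eq_norm_sq_to_K, ← RCLike.ofReal_pow, ← RCLike.ofReal_pow, ← RCLike.ofReal_mul,
    RCLike.ofReal_re, mul_pow]

lemma norm_tens_sub_tens_swap_sq (x y : EuclideanSpace ℂ ι) :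
    ‖tens x y - tens y x‖ ^ 2 = 2 * (‖x‖ * ‖y‖) ^ 2 - 2 * ‖⟪x, y⟫_ℂ‖ ^ 2 := by
  have hre : RCLike.re ⟪tens x y, tens y x⟫_ℂ = ‖⟪x, y⟫_ℂ‖ ^ 2 := by
    rw [inner_tens_tens, ← inner_conj_symm x y, RCLike.conj_mul, ← RCLike.ofReal_pow,
      RCLike.ofReal_re, RCLike.norm_conj]
  rw [@norm_sub_sq ℂ, hre, norm_tens, norm_tens]
  ring

lemma IsSchmidt.inner_tens {h : EuclideanSpace ℂ (ι × κ)} {r : ℕ} {μ : Fin r → ℝ}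
    {u : Fin r → EuclideanSpace ℂ ι} {v : Fin r → EuclideanSpace ℂ κ}
    (hS : IsSchmidt h μ u v) (i : Fin r) : ⟪tens (u i) (v i), h⟫_ℂ = μ i := by
  obtain ⟨-, hu, hv, rfl⟩ := hS
  simp [inner_tens_tens, orthonormal_iff_ite.mp hu, orthonormal_iff_ite.mp hv]

end Tensor

section Antisym

variable {d : ℕ} {ξ : EuclideanSpace ℂ (Fin d × Fin d)}

lemma antisym_apply_swap (hξ : ξ ∈ antisym d) (i j : Fin d) : ξ (j, i) = -ξ (i, j) := by
  induction hξ using Submodule.span_induction generalizing i j with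
  | mem w hw =>
    obtain ⟨a, b, -, rfl⟩ := hw
    simp only [PiLp.smul_apply, PiLp.sub_apply, tens, PiLp.single_apply, smul_eq_mul]
    split_ifs <;> ring
  | zero => simp
  | add x y _ _ hx hy => rw [PiLp.add_apply, PiLp.add_apply, hx, hy, neg_add]
  | smul c x _ hx => rw [PiLp.smul_apply, PiLp.smul_apply, hx, smul_neg]

lemma inner_tens_swap_of_mem_antisym (hξ : ξ ∈ antisym d) (x y : EuclideanSpace ℂ (Fin d)) :
    ⟪tens y x, ξ⟫_ℂ = -⟪tens x y, ξ⟫_ℂ := by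
  simp only [PiLp.inner_apply, RCLike.inner_apply, tens, ← Finset.sum_neg_distrib]
  refine Fintype.sum_equiv (Equiv.prodComm (Fin d) (Fin d)) _ _ fun ⟨a, b⟩ => ?_
  simp only [Equiv.prodComm_apply, Prod.swap_prod_mk, map_mul, antisym_apply_swap hξ b a]
  ring

lemma two_mul_norm_inner_tens_sq_le_of_mem_antisym (hξ : ξ ∈ antisym d)
    (x y : EuclideanSpace ℂ (Fin d)) :
    2 * ‖⟪tens x y, ξ⟫_ℂ‖ ^ 2 ≤ (‖x‖ * ‖y‖ * ‖ξ‖) ^ 2 := by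
  have hanti : ⟪tens x y - tens y x, ξ⟫_ℂ = 2 * ⟪tens x y, ξ⟫_ℂ := by
    rw [inner_sub_left, inner_tens_swap_of_mem_antisym hξ]
    ring
  have hw : ‖tens x y - tens y x‖ ^ 2 ≤ 2 * (‖x‖ * ‖y‖) ^ 2 := by
    rw [norm_tens_sub_tens_swap_sq]
    linarith [sq_nonneg ‖⟪x, y⟫_ℂ‖]
  have hcs : 2 * ‖⟪tens x y, ξ⟫_ℂ‖ ≤ ‖tens x y - tens y x‖ * ‖ξ‖ := by
    rw [← Complex.norm_two, ← norm_mul, ← hanti]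
    exact norm_inner_le_norm _ _
  calc 2 * ‖⟪tens x y, ξ⟫_ℂ‖ ^ 2 = (2 * ‖⟪tens x y, ξ⟫_ℂ‖) ^ 2 / 2 := by ring
    _ ≤ (‖tens x y - tens y x‖ * ‖ξ‖) ^ 2 / 2 := by gcongr
    _ ≤ 2 * (‖x‖ * ‖y‖) ^ 2 * ‖ξ‖ ^ 2 / 2 := by rw [mul_pow]; gcongr
    _ = (‖x‖ * ‖y‖ * ‖ξ‖) ^ 2 := by ring

end Antisym

theorem schmidt_max_sq_le_half_of_antisym_general (d : ℕ)
    (ξ : EuclideanSpace ℂ (Fin d × Fin d)) (hξA : ξ ∈ antisym d) (hξ : ‖ξ‖ = 1) {r : ℕ}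
    (μ : Fin r → ℝ) (u v : Fin r → EuclideanSpace ℂ (Fin d))
    (hS : IsSchmidt ξ μ u v) (μ₁ : ℝ) (hμ₁ : IsGreatest (Set.range μ) μ₁) :
    μ₁ ^ 2 ≤ 1 / 2 := by
  obtain ⟨i, rfl⟩ := hμ₁.1
  have hμ : ‖⟪tens (u i) (v i), ξ⟫_ℂ‖ = μ i := by
    rw [hS.inner_tens, Complex.norm_real, Real.norm_of_nonneg (hS.1 i)]
  have h := two_mul_norm_inner_tens_sq_le_of_mem_antisym hξA (u i) (v i)
  rw [hμ, hS.2.1.1 i, hS.2.2.1.1 i, hξ] at h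
  linarith

/-- for `d ≥ 2`, the largest Schmidt coefficient `μ₁` of any unit vector in the
antisymmetric subspace of `ℂᵈ ⊗ ℂᵈ` satisfies `μ₁² ≤ 1/2`. -/
theorem schmidt_max_sq_le_half_of_antisym (d : ℕ) (hd : 2 ≤ d)
    (ξ : EuclideanSpace ℂ (Fin d × Fin d)) (hξA : ξ ∈ antisym d) (hξ : ‖ξ‖ = 1) {r : ℕ}
    (μ : Fin r → ℝ) (u v : Fin r → EuclideanSpace ℂ (Fin d))
    (hS : IsSchmidt ξ μ u v) (μ₁ : ℝ) (hμ₁ : IsGreatest (Set.range μ) μ₁) :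
    μ₁ ^ 2 ≤ 1 / 2 :=
  schmidt_max_sq_le_half_of_antisym_general d ξ hξA hξ μ u v hS μ₁ hμ₁
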